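/- Let E be a real inner product space, let ξ ∈ E with ‖ξ‖ = 1, and for t ≥ 0 set δ(t) = tanh(t/2)·ξ. Then for all 0 ≤ s ≤ t one has d_B(δ(s), δ(t)) = t − s; that is, δ is a unit-speed geodesic ray from the origin in the Poincaré ball. -/

import Mathlib

/-- The inverse hyperbolic cosine `arcosh x = log (x + √(x² − 1))`. -/
noncomputable def arcosh (x : ℝ) : ℝ := Real.log (x + Real.sqrt (x ^ 2 - 1))

/-- The Poincaré distance on the open unit ball of a real inner product space:
`d_B(x, y) = arcosh (1 + 2‖x − y‖² / ((1 − ‖x‖²)(1 − ‖y‖²)))`. -/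
noncomputable def poincareDist {E : Type*} [NormedAddCommGroup E]
    [InnerProductSpace ℝ E] (x y : E) : ℝ :=
  arcosh (1 + 2 * ‖x - y‖ ^ 2 / ((1 - ‖x‖ ^ 2) * (1 - ‖y‖ ^ 2)))

lemma arcosh_cosh {x : ℝ} (hx : 0 ≤ x) : arcosh (Real.cosh x) = x := by
  unfold arcosh
  have h : Real.cosh x ^ 2 - 1 = Real.sinh x ^ 2 := by
    have := Real.cosh_sq x; linarith
  rw [h, Real.sqrt_sq (Real.sinh_nonneg_iff.mpr hx), Real.cosh_add_sinh, Real.log_exp]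

lemma poincare_key (s t : ℝ) :
    1 + 2 * (Real.tanh (t/2) - Real.tanh (s/2)) ^ 2 /
      ((1 - Real.tanh (s/2) ^ 2) * (1 - Real.tanh (t/2) ^ 2)) = Real.cosh (t - s) := by
  have hcs := Real.cosh_pos (s/2)
  have hct := Real.cosh_pos (t/2)
  have h1 := Real.cosh_sq (s/2)
  have h2 := Real.cosh_sq (t/2)
  have e1 : 1 - Real.tanh (s/2) ^ 2 = 1 / Real.cosh (s/2) ^ 2 := by
    rw [Real.tanh_eq_sinh_div_cosh]; field_simp; linarith
  have e2 : 1 - Real.tanh (t/2) ^ 2 = 1 / Real.cosh (t/2) ^ 2 := by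
    rw [Real.tanh_eq_sinh_div_cosh]; field_simp; linarith
  have hts : Real.cosh (t - s) = 1 + 2 * Real.sinh (t/2 - s/2) ^ 2 := by
    have : t - s = 2 * (t/2 - s/2) := by ring
    rw [this, Real.cosh_two_mul, Real.cosh_sq]; ring
  rw [e1, e2, hts, Real.sinh_sub, Real.tanh_eq_sinh_div_cosh, Real.tanh_eq_sinh_div_cosh]
  field_simp

/-- Let `E` be a real inner product space, `ξ ∈ E` with `‖ξ‖ = 1`,
and `δ t = tanh (t/2) • ξ` for `t ≥ 0`.  Then for all `0 ≤ s ≤ t` one has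
`d_B(δ s, δ t) = t − s`; i.e. `δ` is a unit-speed geodesic ray from the origin in the
Poincaré ball. -/
theorem poincare_ray_isometric {E : Type*} [NormedAddCommGroup E]
    [InnerProductSpace ℝ E] (ξ : E) (hξ : ‖ξ‖ = 1) (s t : ℝ)
    (hs : 0 ≤ s) (hst : s ≤ t) :
    poincareDist (Real.tanh (s / 2) • ξ) (Real.tanh (t / 2) • ξ) = t - s := by
  have hn : ∀ a : ℝ, ‖a • ξ‖ ^ 2 = a ^ 2 := by
    intro a; rw [norm_smul, Real.norm_eq_abs, hξ, mul_one, sq_abs]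
  have hd : ‖Real.tanh (s/2) • ξ - Real.tanh (t/2) • ξ‖ ^ 2
      = (Real.tanh (t/2) - Real.tanh (s/2)) ^ 2 := by
    rw [← sub_smul, hn]; ring
  unfold poincareDist
  rw [hd, hn, hn, poincare_key s t, arcosh_cosh (by linarith)]
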